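/- Let 𝓗 be a set of graphs and suppose there exist reals c > 0 and k > 0 such that for every 𝓗-free graph G with |G| ≥ 2 there is an integer t = t(G) ≥ 2 and t pairwise disjoint subsets B_1, …, B_t of V(G), each of cardinality at least c|G|/t^k, such that either every pair (B_i, B_j) with i ≠ j is complete, or every pair (B_i, B_j) with i ≠ j is anticomplete. Then 𝓗 has the Erdős–Hajnal property: there exists τ > 0 such that every 𝓗-free graph G satisfies max(α(G), ω(G)) ≥ |G|^τ. -/

import Mathlib

open SimpleGraph

/-- The independence (stable set) number of a graph: the clique number of the complement. -/
noncomputable def alphaNum {V : Type*} (G : SimpleGraph V) : ℕ := Gᶜ.cliqueNum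

/-- The clique number of a graph. -/
noncomputable def omegaNum {V : Type*} (G : SimpleGraph V) : ℕ := G.cliqueNum

/-- κ(G) = α(G)·ω(G). -/
noncomputable def kappaNum {V : Type*} (G : SimpleGraph V) : ℕ := alphaNum G * omegaNum G

/-- `A` is complete to `B`: every vertex of `A` is adjacent to every vertex of `B`. -/
def CompleteTo {V : Type*} (G : SimpleGraph V) (A B : Finset V) : Prop :=
  ∀ a ∈ A, ∀ b ∈ B, G.Adj a b

/-- `A` is anticomplete to `B`: no vertex of `A` is adjacent to a vertex of `B`. -/
def AnticompleteTo {V : Type*} (G : SimpleGraph V) (A B : Finset V) : Prop :=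
  ∀ a ∈ A, ∀ b ∈ B, ¬ G.Adj a b

/-- The pattern of a pure blockade `(B 1, …, B t)`: the graph on `Fin t` in which `i, j`
are adjacent iff `i ≠ j` and `B i` is complete to `B j`. -/
def blockadePattern {V : Type*} (G : SimpleGraph V) {t : ℕ} (B : Fin t → Finset V) :
    SimpleGraph (Fin t) where
  Adj i j := i ≠ j ∧ CompleteTo G (B i) (B j)
  symm := ⟨by
    rintro i j ⟨hij, h⟩
    exact ⟨hij.symm, fun a ha b hb => (h b hb a ha).symm⟩⟩
  loopless := ⟨fun i h => h.1 rfl⟩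

/-! With `κ(G) = α(G) ω(G)`, a pure blockade `B 1, …, B t` of `G` has a part with
`t κ(G[B i]) ≤ κ(G)`. In the complete case take the part of least clique number `m`: cliques
of size `m` in all parts glue to a clique of size `t m` in `G`, while `α(G[B i]) ≤ α(G)`;
the anticomplete case is the complete case in the complement. For `τ > 0` small enough,
`t (c n / t ^ k) ^ τ ≥ n ^ τ` for all `t ≥ 2`, so induction on `|G|` gives `κ(G) ≥ |G| ^ τ`,
and hence `max (α(G), ω(G)) ≥ |G| ^ (τ / 2)`. -/

namespace SimpleGraph

variable {V : Type*}

theorem compl_induce (G : SimpleGraph V) (s : Set V) : (G.induce s)ᶜ = Gᶜ.induce s := by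
  ext a b
  simp [Subtype.ext_iff]

theorem exists_isNClique_cliqueNum_induce [Finite V] (G : SimpleGraph V) (s : Set V) :
    ∃ C : Finset V, ↑C ⊆ s ∧ G.IsNClique (G.induce s).cliqueNum C := by
  obtain ⟨C, hC⟩ := (G.induce s).exists_isNClique_cliqueNum
  exact ⟨C.map (.subtype _), Finset.map_subtype_subset C, (isNClique_induce_iff s C _).mp hC⟩

end SimpleGraph

section Invariants

variable {V : Type*}

theorem kappaNum_compl (G : SimpleGraph V) : kappaNum Gᶜ = kappaNum G := by
  simp only [kappaNum, alphaNum, omegaNum, compl_compl, Nat.mul_comm]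

theorem alphaNum_induce_le [Finite V] (G : SimpleGraph V) (s : Set V) :
    alphaNum (G.induce s) ≤ alphaNum G := by
  simpa only [alphaNum, compl_induce] using Gᶜ.cliqueNum_induce_le s

theorem one_le_kappaNum [Finite V] [Nonempty V] (G : SimpleGraph V) : 1 ≤ kappaNum G := by
  have one_le_cliqueNum (H : SimpleGraph V) : 1 ≤ H.cliqueNum := by
    obtain ⟨v⟩ := ‹Nonempty V›
    simpa using IsClique.card_le_cliqueNum (G := H) (t := {v}) (tc := by simp)
  exact Nat.mul_le_mul (one_le_cliqueNum Gᶜ) (one_le_cliqueNum G)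

theorem kappaNum_le_sq_max (G : SimpleGraph V) :
    kappaNum G ≤ max (alphaNum G) (omegaNum G) ^ 2 := by
  rw [sq]
  exact Nat.mul_le_mul (le_max_left _ _) (le_max_right _ _)

end Invariants

section Blockade

open Finset

variable {V : Type*} {t : ℕ}

theorem CompleteTo.compl_of_anticompleteTo {G : SimpleGraph V} {A B : Finset V}
    (hAB : Disjoint A B) (h : AnticompleteTo G A B) : CompleteTo Gᶜ A B :=
  fun a ha b hb => ⟨fun hab => disjoint_left.mp hAB ha (hab ▸ hb), h a ha b hb⟩

theorem sum_card_le_cliqueNum_of_completeTo [Finite V] {G : SimpleGraph V}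
    {B C : Fin t → Finset V} (hdisj : Pairwise (Function.onFun Disjoint B))
    (hcomp : ∀ i j, i ≠ j → CompleteTo G (B i) (B j))
    (hCB : ∀ i, C i ⊆ B i) (hC : ∀ i, G.IsClique (C i : Set V)) :
    ∑ i, #(C i) ≤ G.cliqueNum := by
  classical
  have hdisjC : ((univ : Finset (Fin t)) : Set (Fin t)).PairwiseDisjoint C :=
    fun i _ j _ hij => (hdisj hij).mono (hCB i) (hCB j)
  have hclique : G.IsClique (univ.biUnion C : Set V) := by
    intro x hx y hy hxy
    simp only [coe_biUnion, coe_univ, Set.mem_univ, Set.iUnion_true, Set.mem_iUnion,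
      mem_coe] at hx hy
    obtain ⟨i, hi⟩ := hx
    obtain ⟨j, hj⟩ := hy
    rcases eq_or_ne i j with rfl | hij
    · exact hC i hi hj hxy
    · exact hcomp i j hij x (hCB i hi) y (hCB j hj)
  rw [← card_biUnion hdisjC]
  exact hclique.card_le_cliqueNum

theorem exists_mul_kappaNum_induce_le_of_completeTo [Finite V] {G : SimpleGraph V}
    {B : Fin t → Finset V} (ht : 0 < t) (hdisj : Pairwise (Function.onFun Disjoint B))
    (hcomp : ∀ i j, i ≠ j → CompleteTo G (B i) (B j)) :
    ∃ i, t * kappaNum (G.induce (B i : Set V)) ≤ kappaNum G := by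
  have : Nonempty (Fin t) := ⟨⟨0, ht⟩⟩
  obtain ⟨i₀, hmin⟩ := Finite.exists_min fun i => omegaNum (G.induce (B i : Set V))
  choose C hCB hC using fun i => G.exists_isNClique_cliqueNum_induce (B i : Set V)
  have homega : t * omegaNum (G.induce (B i₀ : Set V)) ≤ omegaNum G :=
    calc t * omegaNum (G.induce (B i₀ : Set V))
        = ∑ _ : Fin t, omegaNum (G.induce (B i₀ : Set V)) := by simp
      _ ≤ ∑ i, #(C i) := sum_le_sum fun i _ => (hC i).card_eq ▸ hmin i
      _ ≤ omegaNum G :=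
        sum_card_le_cliqueNum_of_completeTo hdisj hcomp (fun i => by exact_mod_cast hCB i)
          fun i => (hC i).isClique
  refine ⟨i₀, ?_⟩
  calc t * kappaNum (G.induce (B i₀ : Set V))
      = alphaNum (G.induce (B i₀ : Set V)) * (t * omegaNum (G.induce (B i₀ : Set V))) := by
        rw [kappaNum]; ring
    _ ≤ kappaNum G := Nat.mul_le_mul (alphaNum_induce_le G _) homega

theorem exists_mul_kappaNum_induce_le [Finite V] {G : SimpleGraph V}
    {B : Fin t → Finset V} (ht : 0 < t) (hdisj : Pairwise (Function.onFun Disjoint B))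
    (hpure : (∀ i j, i ≠ j → CompleteTo G (B i) (B j)) ∨
      (∀ i j, i ≠ j → AnticompleteTo G (B i) (B j))) :
    ∃ i, t * kappaNum (G.induce (B i : Set V)) ≤ kappaNum G := by
  rcases hpure with hcomp | hanti
  · exact exists_mul_kappaNum_induce_le_of_completeTo ht hdisj hcomp
  · obtain ⟨i, hi⟩ := exists_mul_kappaNum_induce_le_of_completeTo (G := Gᶜ) ht hdisj
      fun i j hij => .compl_of_anticompleteTo (hdisj hij) (hanti i j hij)
    exact ⟨i, by rwa [← compl_induce, kappaNum_compl, kappaNum_compl] at hi⟩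

theorem card_lt_card_of_pairwise_disjoint [Fintype V] {B : Fin t → Finset V} (ht : 2 ≤ t)
    (hdisj : Pairwise (Function.onFun Disjoint B)) (hne : ∀ i, (B i).Nonempty) (i : Fin t) :
    #(B i) < Fintype.card V := by
  classical
  have : Nontrivial (Fin t) := Fin.nontrivial_iff_two_le.mpr ht
  obtain ⟨j, hji⟩ := exists_ne i
  calc #(B i) < #(B i) + #(B j) := Nat.lt_add_of_pos_right (hne j).card_pos
    _ = #(B i ∪ B j) := (card_union_of_disjoint (hdisj hji.symm)).symm
    _ ≤ Fintype.card V := card_le_univ _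

end Blockade

open Filter Topology in
theorem exists_pos_rpow_le_mul_rpow_div {c : ℝ} (hc : 0 < c) (k : ℝ) :
    ∃ τ : ℝ, 0 < τ ∧ ∀ t n : ℝ, 2 ≤ t → 0 ≤ n → n ^ τ ≤ t * (c * n / t ^ k) ^ τ := by
  -- `t * (c n / t ^ k) ^ τ = t ^ (1 - k τ) * c ^ τ * n ^ τ`, and at `t = 2` the factor in front
  -- of `n ^ τ` tends to `2` as `τ → 0`
  have hlim : Tendsto (fun τ : ℝ => (2 : ℝ) ^ (1 - k * τ) * c ^ τ) (𝓝 0) (𝓝 2) := by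
    have hcont : Continuous fun τ : ℝ => (2 : ℝ) ^ (1 - k * τ) * c ^ τ :=
      ((Real.continuous_const_rpow two_ne_zero).comp (by fun_prop)).mul
        (Real.continuous_const_rpow hc.ne')
    simpa using hcont.tendsto 0
  have hsmall : ∀ᶠ τ in 𝓝 (0 : ℝ), 1 ≤ (2 : ℝ) ^ (1 - k * τ) * c ^ τ ∧ k * τ ≤ 1 :=
    (hlim.eventually (eventually_ge_nhds one_lt_two)).and
      ((continuous_const.mul continuous_id).tendsto' 0 0 (mul_zero k) |>.eventually
        (eventually_le_nhds one_pos))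
  obtain ⟨τ, ⟨hgrow, hkτ⟩, hτ⟩ :=
    ((hsmall.filter_mono nhdsWithin_le_nhds).and self_mem_nhdsWithin).exists (f := 𝓝[>] 0)
  refine ⟨τ, hτ, fun t n ht hn => ?_⟩
  have htpos : 0 < t := by linarith
  calc n ^ τ ≤ (2 : ℝ) ^ (1 - k * τ) * c ^ τ * n ^ τ := le_mul_of_one_le_left (by positivity) hgrow
    _ ≤ t ^ (1 - k * τ) * c ^ τ * n ^ τ := by gcongr
    _ = t * (c * n / t ^ k) ^ τ := by
      rw [Real.div_rpow (by positivity) (by positivity), Real.mul_rpow hc.le hn,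
        ← Real.rpow_mul htpos.le, Real.rpow_sub htpos, Real.rpow_one]
      ring

def InducedFree (𝓗 : Set (Σ n : ℕ, SimpleGraph (Fin n))) {V : Type*} (G : SimpleGraph V) :
    Prop :=
  ∀ H ∈ 𝓗, ¬ Nonempty (H.2 ↪g G)

theorem InducedFree.induce {𝓗 : Set (Σ n : ℕ, SimpleGraph (Fin n))} {V : Type*}
    {G : SimpleGraph V} (hG : InducedFree 𝓗 G) (s : Set V) : InducedFree 𝓗 (G.induce s) :=
  fun H hH ⟨e⟩ => hG H hH ⟨(Embedding.induce s).comp e⟩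

def HasPureBlockade (c k : ℝ) {V : Type*} [Fintype V] (G : SimpleGraph V) : Prop :=
  ∃ t : ℕ, 2 ≤ t ∧ ∃ B : Fin t → Finset V,
    Pairwise (Function.onFun Disjoint B) ∧
    (∀ i, c * (Fintype.card V : ℝ) / (t : ℝ) ^ k ≤ ((B i).card : ℝ)) ∧
    ((∀ i j, i ≠ j → CompleteTo G (B i) (B j)) ∨
     (∀ i j, i ≠ j → AnticompleteTo G (B i) (B j)))

theorem rpow_card_le_kappaNum {𝓗 : Set (Σ n : ℕ, SimpleGraph (Fin n))} {c k τ : ℝ}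
    (hc : 0 < c) (hτ : 0 < τ)
    (hstep : ∀ t n : ℝ, 2 ≤ t → 0 ≤ n → n ^ τ ≤ t * (c * n / t ^ k) ^ τ)
    (hyp : ∀ (V : Type) [Fintype V] (G : SimpleGraph V),
      InducedFree 𝓗 G → 2 ≤ Fintype.card V → HasPureBlockade c k G)
    (V : Type) [Fintype V] (G : SimpleGraph V) (hG : InducedFree 𝓗 G) :
    (Fintype.card V : ℝ) ^ τ ≤ kappaNum G := by
  suffices ∀ n, ∀ (V : Type) [Fintype V] (G : SimpleGraph V), Fintype.card V = n →
      InducedFree 𝓗 G → (n : ℝ) ^ τ ≤ kappaNum G from this _ V G rfl hG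
  intro n
  induction n using Nat.strong_induction_on with
  | _ n ih =>
  intro V _ G hcard hG
  rcases lt_or_ge n 2 with hn | hn
  · interval_cases n
    · simp [Real.zero_rpow hτ.ne']
    · have : Nonempty V := Fintype.card_pos_iff.mp (by omega)
      simpa using one_le_kappaNum G
  obtain ⟨t, ht, B, hdisj, hsize, hpure⟩ := hyp V G hG (hcard ▸ hn)
  subst hcard
  have hne (i : Fin t) : (B i).Nonempty := by
    rw [← Finset.card_pos, ← Nat.cast_pos (α := ℝ)]
    exact lt_of_lt_of_le (by positivity) (hsize i)
  obtain ⟨i, hi⟩ := exists_mul_kappaNum_induce_le (by omega) hdisj hpure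
  have hpart := ih _ (card_lt_card_of_pairwise_disjoint ht hdisj hne i) (B i : Set V)
    (G.induce _) (Fintype.card_coe _) (hG.induce _)
  calc (Fintype.card V : ℝ) ^ τ ≤ t * (c * Fintype.card V / t ^ k) ^ τ :=
        hstep _ _ (by exact_mod_cast ht) (Nat.cast_nonneg _)
    _ ≤ t * (B i).card ^ τ := by gcongr; exact hsize i
    _ ≤ t * kappaNum (G.induce (B i : Set V)) := by gcongr
    _ ≤ kappaNum G := by exact_mod_cast hi

theorem stmt_19_general (𝓗 : Set (Σ n : ℕ, SimpleGraph (Fin n))) (c k : ℝ)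
    (hc : 0 < c)
    (hyp : ∀ (V : Type) [Fintype V] (G : SimpleGraph V),
      (∀ H ∈ 𝓗, ¬ Nonempty (H.2 ↪g G)) → 2 ≤ Fintype.card V →
      ∃ t : ℕ, 2 ≤ t ∧ ∃ B : Fin t → Finset V,
        Pairwise (Function.onFun Disjoint B) ∧
        (∀ i, c * (Fintype.card V : ℝ) / (t : ℝ) ^ k ≤ ((B i).card : ℝ)) ∧
        ((∀ i j, i ≠ j → CompleteTo G (B i) (B j)) ∨
         (∀ i j, i ≠ j → AnticompleteTo G (B i) (B j)))) :
    ∃ τ : ℝ, 0 < τ ∧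
      ∀ (V : Type) [Fintype V] (G : SimpleGraph V),
        (∀ H ∈ 𝓗, ¬ Nonempty (H.2 ↪g G)) →
        (Fintype.card V : ℝ) ^ τ ≤ ((max (alphaNum G) (omegaNum G) : ℕ) : ℝ) := by
  obtain ⟨τ, hτ, hstep⟩ := exists_pos_rpow_le_mul_rpow_div hc k
  refine ⟨τ / 2, by positivity, fun V _ G hG => ?_⟩
  have hκ := rpow_card_le_kappaNum hc hτ hstep hyp V G hG
  calc (Fintype.card V : ℝ) ^ (τ / 2) = √((Fintype.card V : ℝ) ^ τ) := by
        rw [Real.sqrt_eq_rpow, ← Real.rpow_mul (Nat.cast_nonneg _)]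
        ring_nf
    _ ≤ √(((max (alphaNum G) (omegaNum G) : ℕ) : ℝ) ^ 2) :=
        Real.sqrt_le_sqrt (hκ.trans (by exact_mod_cast kappaNum_le_sq_max G))
    _ = ((max (alphaNum G) (omegaNum G) : ℕ) : ℝ) := Real.sqrt_sq (Nat.cast_nonneg _)

/-- Tomon's observation: if for every `𝓗`-free graph `G` with `|G| ≥ 2` there are
`t ≥ 2` pairwise disjoint sets of size at least `c|G|/t^k` that are pairwise complete or
pairwise anticomplete, then `𝓗` has the Erdős–Hajnal property. -/
theorem stmt_19 (𝓗 : Set (Σ n : ℕ, SimpleGraph (Fin n))) (c k : ℝ)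
    (hc : 0 < c) (hk : 0 < k)
    (hyp : ∀ (V : Type) [Fintype V] (G : SimpleGraph V),
      (∀ H ∈ 𝓗, ¬ Nonempty (H.2 ↪g G)) → 2 ≤ Fintype.card V →
      ∃ t : ℕ, 2 ≤ t ∧ ∃ B : Fin t → Finset V,
        Pairwise (Function.onFun Disjoint B) ∧
        (∀ i, c * (Fintype.card V : ℝ) / (t : ℝ) ^ k ≤ ((B i).card : ℝ)) ∧
        ((∀ i j, i ≠ j → CompleteTo G (B i) (B j)) ∨
         (∀ i j, i ≠ j → AnticompleteTo G (B i) (B j)))) :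
    ∃ τ : ℝ, 0 < τ ∧
      ∀ (V : Type) [Fintype V] (G : SimpleGraph V),
        (∀ H ∈ 𝓗, ¬ Nonempty (H.2 ↪g G)) →
        (Fintype.card V : ℝ) ^ τ ≤ ((max (alphaNum G) (omegaNum G) : ℕ) : ℝ) :=
  stmt_19_general 𝓗 c k hc hyp
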